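/- arXiv:2002.02440 — 3 statements merged into one kernel-verified Lean document; each statement's English description precedes it below -/
import Mathlib

section
/- Let F be a field with at least k−1 distinct elements β_1,...,β_{k−1}, and suppose X_1,...,X_k ∈ F^m satisfy Σ_{i=1}^{k−1} α_i X_i = X_k with all α_i ≠ 0. Fix an additional element β_k distinct from β_1,...,β_{k−1}. Define p*(z) = Σ_{i=1}^{k−1} α_i X_i · Π_{j ∈ [k−1]\{i}} (z−β_j)(β_k−β_j)^{−1}. Then p* is a curve of componentwise degree at most k−2 such that p*(β_k) = X_k and for each i ∈ [k−1], p*(β_i) = λ_i X_i for some nonzero scalar λ_i ∈ F. -/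
open Polynomial Finset

namespace Polynomial

variable {F ι : Type*} [Field F] [Fintype ι] [DecidableEq ι]

/-- The `i`-th Lagrange basis polynomial of the nodes `v j`, `j ≠ i`, normalised to take the
value `1` at the anchor `b` instead of at `v i`. -/
noncomputable def anchoredBasis (v : ι → F) (b : F) (i : ι) : F[X] :=
  ∏ j ∈ univ.erase i, (X - C (v j)) * C ((b - v j)⁻¹)

theorem natDegree_anchoredBasis_le (v : ι → F) (b : F) (i : ι) :
    (anchoredBasis v b i).natDegree ≤ Fintype.card ι - 1 := by
  calc (anchoredBasis v b i).natDegree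
      ≤ ∑ j ∈ univ.erase i, ((X - C (v j)) * C ((b - v j)⁻¹)).natDegree := by
        rw [anchoredBasis]
        exact natDegree_prod_le _ _
    _ ≤ ∑ _j ∈ univ.erase i, 1 := by
        refine sum_le_sum fun j _ => natDegree_mul_le.trans ?_
        simp
    _ = Fintype.card ι - 1 := by simp [card_erase_of_mem]

theorem eval_anchoredBasis (v : ι → F) (b x : F) (i : ι) :
    (anchoredBasis v b i).eval x = ∏ j ∈ univ.erase i, (x - v j) * (b - v j)⁻¹ := by
  simp [anchoredBasis, eval_prod]

theorem eval_anchor_anchoredBasis {v : ι → F} {b : F} (hb : ∀ j, b ≠ v j) (i : ι) :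
    (anchoredBasis v b i).eval b = 1 := by
  rw [eval_anchoredBasis]
  exact prod_eq_one fun j _ => mul_inv_cancel₀ (sub_ne_zero.mpr (hb j))

theorem eval_node_anchoredBasis_of_ne (v : ι → F) (b : F) {i j : ι} (hji : j ≠ i) :
    (anchoredBasis v b i).eval (v j) = 0 := by
  rw [eval_anchoredBasis]
  exact prod_eq_zero (mem_erase.mpr ⟨hji, mem_univ j⟩) (by simp)

theorem eval_node_anchoredBasis_self_ne_zero {v : ι → F} {b : F} (hv : Function.Injective v)
    (hb : ∀ j, b ≠ v j) (i : ι) : (anchoredBasis v b i).eval (v i) ≠ 0 := by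
  rw [eval_anchoredBasis]
  refine prod_ne_zero_iff.mpr fun j hj => mul_ne_zero ?_ (inv_ne_zero (sub_ne_zero.mpr (hb j)))
  exact sub_ne_zero.mpr fun h => (mem_erase.mp hj).1 (hv h).symm

theorem natDegree_sum_C_mul_anchoredBasis_le (v : ι → F) (b : F) (w : ι → F) :
    (∑ i, C (w i) * anchoredBasis v b i).natDegree ≤ Fintype.card ι - 1 :=
  natDegree_sum_le_of_forall_le _ _ fun i _ =>
    (natDegree_C_mul_le _ _).trans (natDegree_anchoredBasis_le v b i)

theorem eval_anchor_sum_C_mul_anchoredBasis {v : ι → F} {b : F} (hb : ∀ j, b ≠ v j)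
    (w : ι → F) : (∑ i, C (w i) * anchoredBasis v b i).eval b = ∑ i, w i := by
  simp [eval_finsetSum, eval_anchor_anchoredBasis hb]

theorem eval_node_sum_C_mul_anchoredBasis (v : ι → F) (b : F) (w : ι → F) (i : ι) :
    (∑ i, C (w i) * anchoredBasis v b i).eval (v i) = w i * (anchoredBasis v b i).eval (v i) := by
  rw [eval_finsetSum, sum_eq_single i (fun j _ hji => ?_) (by simp)]
  · simp
  · simp [eval_node_anchoredBasis_of_ne v b hji.symm]

end Polynomial

/-- Given `k+1` points `X 0, …, X k` in `F^m` with a minimal linear dependency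
`∑_{i<k} α i • X i = X k` (all `α i ≠ 0`), and distinct parameters `β 0, …, β k`, the explicit
curve `p*` (componentwise degree ≤ k-1, i.e. number-of-points minus 2) satisfies
`p*(β k) = X k` and `p*(β i) = λ i • X i` for nonzero scalars `λ i`. -/
theorem stmt3 {F : Type*} [Field F] {m k : ℕ}
    (X : Fin (k + 1) → Fin m → F) (α : Fin k → F) (β : Fin (k + 1) → F)
    (hβ : Function.Injective β) (hα : ∀ i, α i ≠ 0)
    (hdep : ∑ i : Fin k, α i • X i.castSucc = X (Fin.last k)) :
    let p : Fin m → Polynomial F := fun c =>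
      ∑ i : Fin k, Polynomial.C (α i * X i.castSucc c) *
        ∏ j ∈ Finset.univ.erase i,
          ((Polynomial.X - Polynomial.C (β j.castSucc)) *
            Polynomial.C ((β (Fin.last k) - β j.castSucc)⁻¹))
    (∀ c, (p c).natDegree ≤ k - 1) ∧
    (∀ c, (p c).eval (β (Fin.last k)) = X (Fin.last k) c) ∧
    ∀ i : Fin k, ∃ lam : F, lam ≠ 0 ∧
      ∀ c, (p c).eval (β i.castSucc) = lam * X i.castSucc c := by
  set v : Fin k → F := fun j => β j.castSucc
  set b := β (Fin.last k)
  intro p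
  have hp : ∀ c, p c = ∑ i, C (α i * X i.castSucc c) * anchoredBasis v b i := fun c => rfl
  have hv : Function.Injective v := hβ.comp (Fin.castSucc_injective k)
  have hb : ∀ j, b ≠ v j := fun j h => (Fin.castSucc_lt_last j).ne (hβ h).symm
  refine ⟨fun c => ?_, fun c => ?_, fun i => ?_⟩
  · simpa [hp] using natDegree_sum_C_mul_anchoredBasis_le v b fun i => α i * X i.castSucc c
  · rw [hp, eval_anchor_sum_C_mul_anchoredBasis hb, ← hdep]
    simp
  · refine ⟨α i * (anchoredBasis v b i).eval (v i),
      mul_ne_zero (hα i) (eval_node_anchoredBasis_self_ne_zero hv hb i), fun c => ?_⟩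
    rw [hp, eval_node_sum_C_mul_anchoredBasis v b _ i]
    ring
end

section
/- Let F_q be a finite field with q > 3 elements and let X_1,...,X_k be k > 8·q^{(m−1)/2} distinct points in F_q^m with k > 1. Then either there exist three of the input points lying on a common affine line, or there exist four distinct input points X_i, X_j, X_{i'}, X_{j'} such that the line through X_i and X_j intersects the line through X_{i'} and X_{j'} at a point outside {X_i, X_j, X_{i'}, X_{j'}}. -/
/-!
Suppose no three of the points are collinear. For `i < j` and `z ∉ {0, 1}` the point
`X i + z • (X j - X i)` is then never one of the `X l`, and two such points with different
parameters `(i, j, z)` can only coincide when the pairs `{i, j}` and `{i', j'}` are disjoint: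
lines through two pairs sharing an index meet only at that index. So if no two lines through
disjoint pairs cross away from the input points, these `(k choose 2)(q - 2)` points are
pairwise distinct, whence `(k choose 2)(q - 2) ≤ q ^ m`. But `q ≥ 4` and `k² > 64 q ^ (m - 1)`
give `(k choose 2)(q - 2) ≥ k² q / 8 > 8 q ^ m`.
-/

open AffineMap Finset

theorem Finset.card_filter_fst_lt_snd {ι : Type*} [Fintype ι] [LinearOrder ι] :
    #({p : ι × ι | p.1 < p.2} : Finset (ι × ι)) = (Fintype.card ι).choose 2 := by
  have h := sum_sym2_filter_not_isDiag (M := ℕ) (univ : Finset ι) (fun _ => 1)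
  simp only [sum_const, smul_eq_mul, mul_one, sym2_univ] at h
  rw [← Sym2.card_subtype_not_diag, Fintype.card_subtype, h]
  congr 1
  ext p
  simpa using ne_of_lt

theorem pow_lt_choose_two_mul_sub_two {q k m : ℕ} (hq : 3 < q) (hk1 : 1 < k)
    (hk : (k : ℝ) > 8 * (q : ℝ) ^ (((m : ℝ) - 1) / 2)) :
    q ^ m < k.choose 2 * (q - 2) := by
  have hq0 : (0 : ℝ) < q := by positivity
  have hsq : ((q : ℝ) ^ (((m : ℝ) - 1) / 2)) ^ 2 * q = (q : ℝ) ^ m := by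
    rw [← Real.rpow_mul_natCast hq0.le, Nat.cast_ofNat, div_mul_cancel₀ _ two_ne_zero,
      Real.rpow_sub_one hq0.ne', Real.rpow_natCast, div_mul_cancel₀ _ hq0.ne']
  have hk2 : 64 * (q : ℝ) ^ m < (k : ℝ) ^ 2 * q := by
    have := pow_lt_pow_left₀ hk (by positivity) two_ne_zero
    nlinarith
  have hq' : (4 : ℝ) ≤ q := by exact_mod_cast hq
  have hk' : (2 : ℝ) ≤ k := by exact_mod_cast hk1
  have hkk : (k : ℝ) ^ 2 / 2 ≤ k * (k - 1) := by nlinarith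
  have hqq : (q : ℝ) / 2 ≤ q - 2 := by linarith
  rw [← Nat.cast_lt (α := ℝ)]
  push_cast [Nat.cast_choose_two, Nat.cast_sub (by omega : 2 ≤ q)]
  calc (q : ℝ) ^ m < (k : ℝ) ^ 2 * q / 64 := by linarith
    _ ≤ (k : ℝ) ^ 2 / 2 / 2 * (q / 2) := by nlinarith [sq_nonneg (k : ℝ)]
    _ ≤ k * (k - 1) / 2 * (q - 2) := by gcongr; linarith

section

variable {F V : Type*} [Field F] [AddCommGroup V] [Module F V]

theorem eq_lineMap_of_lineMap_eq_lineMap {p q r : V} {w w' : F} (hw' : w' ≠ 0)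
    (h : lineMap p q w = lineMap p r w') : r = lineMap p q (w / w') := by
  rw [lineMap_apply_module', lineMap_apply_module', add_left_inj] at h
  rw [lineMap_apply_module', div_eq_inv_mul, mul_smul, h, inv_smul_smul₀ hw', sub_add_cancel]

variable (F) in
def NoThreeCollinear {ι : Type*} (X : ι → V) : Prop :=
  ∀ (i j l : ι) (z : F), i ≠ j → X l = lineMap (X i) (X j) z → l = i ∨ l = j

namespace NoThreeCollinear

variable {ι : Type*} {X : ι → V}

theorem lineMap_ne (hX : NoThreeCollinear F X) (hinj : Function.Injective X) {i j : ι} {z : F}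
    (hij : i ≠ j) (hz0 : z ≠ 0) (hz1 : z ≠ 1) (l : ι) : lineMap (X i) (X j) z ≠ X l := by
  intro h
  rcases hX i j l z hij h.symm with rfl | rfl
  · exact (lineMap_eq_left_iff.mp h).elim (hinj.ne hij) hz0
  · exact (lineMap_eq_right_iff.mp h).elim (hinj.ne hij) hz1

theorem eq_of_lineMap_eq_lineMap (hX : NoThreeCollinear F X) {a b c : ι} {w w' : F}
    (hab : a ≠ b) (hac : a ≠ c) (hw' : w' ≠ 0)
    (h : lineMap (X a) (X b) w = lineMap (X a) (X c) w') : b = c :=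
  ((hX a b c _ hab (eq_lineMap_of_lineMap_eq_lineMap hw' h)).resolve_left hac.symm).symm

theorem eq_or_nodup_of_lineMap_eq_lineMap [LinearOrder ι] (hX : NoThreeCollinear F X)
    (hinj : Function.Injective X) {i j i' j' : ι} {z z' : F}
    (hlt : i < j) (hlt' : i' < j') (hz0' : z' ≠ 0) (hz1' : z' ≠ 1)
    (h : lineMap (X i) (X j) z = lineMap (X i') (X j') z') :
    (i = i' ∧ j = j' ∧ z = z') ∨ [i, j, i', j'].Nodup := by
  have hsub : 1 - z' ≠ 0 := sub_ne_zero.mpr hz1'.symm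
  by_cases hii' : i = i'
  · subst hii'
    obtain rfl := hX.eq_of_lineMap_eq_lineMap hlt.ne hlt'.ne hz0' h
    exact .inl ⟨rfl, rfl, (lineMap_eq_lineMap_iff.mp h).resolve_left (hinj.ne hlt.ne)⟩
  by_cases hij' : i = j'
  · subst hij'
    rw [← lineMap_apply_one_sub (X i)] at h
    exact absurd (hX.eq_of_lineMap_eq_lineMap hlt.ne hlt'.ne' hsub h) (hlt'.trans hlt).ne'
  by_cases hji' : j = i'
  · subst hji'
    rw [← lineMap_apply_one_sub (X j)] at h
    exact absurd (hX.eq_of_lineMap_eq_lineMap hlt.ne' hlt'.ne hz0' h) (hlt.trans hlt').ne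
  by_cases hjj' : j = j'
  · subst hjj'
    rw [← lineMap_apply_one_sub (X j), ← lineMap_apply_one_sub (X j)] at h
    exact absurd (hX.eq_of_lineMap_eq_lineMap hlt.ne' hlt'.ne' hsub h) hii'
  right
  simp [hlt.ne, hlt'.ne, hii', hij', hji', hjj']

theorem exists_nodup_lineMap_eq_lineMap [Fintype ι] [Fintype F] [Fintype V]
    (hX : NoThreeCollinear F X) (hinj : Function.Injective X)
    (hcard : Fintype.card V < (Fintype.card ι).choose 2 * (Fintype.card F - 2)) :
    ∃ i j i' j' : ι, [i, j, i', j'].Nodup ∧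
      ∃ z z' : F, z ≠ 0 ∧ z ≠ 1 ∧ lineMap (X i) (X j) z = lineMap (X i') (X j') z' := by
  classical
  let : LinearOrder ι := LinearOrder.lift' _ (Fintype.equivFin ι).injective
  let S := ({p : ι × ι | p.1 < p.2} : Finset (ι × ι)) ×ˢ (univ \ {0, 1} : Finset F)
  have hS : #S = (Fintype.card ι).choose 2 * (Fintype.card F - 2) := by
    rw [card_product, card_filter_fst_lt_snd, card_sdiff_of_subset (subset_univ _),
      card_pair zero_ne_one, card_univ]
  obtain ⟨⟨⟨i, j⟩, z⟩, hmem, ⟨⟨i', j'⟩, z'⟩, hmem', hne, heq⟩ :=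
    exists_ne_map_eq_of_card_lt_of_maps_to (t := univ) (by rwa [hS, card_univ])
      (f := fun t : (ι × ι) × F ↦ lineMap (X t.1.1) (X t.1.2) t.2)
      (fun _ _ ↦ mem_coe.mpr (mem_univ _))
  simp only [S, mem_product, mem_filter, mem_univ, true_and, mem_sdiff, mem_insert,
    mem_singleton, not_or] at hmem hmem'
  rcases hX.eq_or_nodup_of_lineMap_eq_lineMap hinj hmem.1 hmem'.1 hmem'.2.1 hmem'.2.2 heq with
    ⟨rfl, rfl, rfl⟩ | hnodup
  · exact absurd rfl hne
  · exact ⟨i, j, i', j', hnodup, z, z', hmem.2.1, hmem.2.2, heq⟩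

end NoThreeCollinear

end

/-- Over a finite field with `q > 3` elements, given `k > 8·q^{(m-1)/2}` distinct
points of `F^m` (with `k > 1`), either three of them lie on a common affine line, or there are
four distinct points such that the line through the first pair meets the line through the
second pair at a point outside the four points. -/
theorem stmt9 {F : Type*} [Field F] [Fintype F] {m k : ℕ}
    (hq : 3 < Fintype.card F) (hk1 : 1 < k)
    (X : Fin k → Fin m → F) (hX : Function.Injective X)
    (hk : (k : ℝ) > 8 * (Fintype.card F : ℝ) ^ (((m : ℝ) - 1) / 2)) :
    (∃ i j l : Fin k, i ≠ j ∧ i ≠ l ∧ j ≠ l ∧ ∃ z : F, X l = X i + z • (X j - X i)) ∨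
    (∃ i j i' j' : Fin k, [i, j, i', j'].Nodup ∧ ∃ P : Fin m → F,
      (∃ z : F, P = X i + z • (X j - X i)) ∧
      (∃ z : F, P = X i' + z • (X j' - X i')) ∧
      P ∉ ({X i, X j, X i', X j'} : Set (Fin m → F))) := by
  have hline (i j : Fin k) (z : F) : X i + z • (X j - X i) = lineMap (X i) (X j) z := by
    rw [lineMap_apply_module', add_comm]
  simp only [hline]
  refine or_iff_not_imp_left.mpr fun hcol => ?_
  have hncol : NoThreeCollinear F X := by
    intro i j l z hij h
    by_contra! hne
    exact hcol ⟨i, j, l, hij, hne.1.symm, hne.2.symm, z, h⟩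
  have hcard :
      Fintype.card (Fin m → F) < (Fintype.card (Fin k)).choose 2 * (Fintype.card F - 2) := by
    simpa only [Fintype.card_fun, Fintype.card_fin] using
      pow_lt_choose_two_mul_sub_two hq hk1 hk
  obtain ⟨i, j, i', j', hnodup, z, z', hz0, hz1, heq⟩ :=
    hncol.exists_nodup_lineMap_eq_lineMap hX hcard
  have hij : i ≠ j := by rintro rfl; simp at hnodup
  refine ⟨i, j, i', j', hnodup, _, ⟨z, rfl⟩, ⟨z', heq⟩, ?_⟩
  have hout := hncol.lineMap_ne hX hij hz0 hz1
  simp only [Set.mem_insert_iff, Set.mem_singleton_iff, not_or]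
  exact ⟨hout i, hout j, hout i', hout j'⟩
end

section
/- Let F be a field, f ∈ F[x_1,...,x_m] of total degree d, and X_1,...,X_k ∈ F^m points lying on a curve p : F → F^m of componentwise degree at most k−2 (i.e., p(β_i) = X_i for distinct β_i). If |F| ≥ d(k−2) + s + 1 for a nonnegative integer s, then there exist d(k−2) + s + 1 distinct evaluation points of the univariate polynomial f∘p such that any d(k−2)+1 of the corresponding values suffice to recover f(X_1),...,f(X_k). -/
/-! `f ∘ p` is a univariate polynomial of degree at most `d (k - 2)`, so it is determined by its
values at any `d (k - 2) + 1` distinct points; any `d (k - 2) + s + 1` distinct field elements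
therefore serve as evaluation points, and `f (X i) = (f ∘ p) (β i)`. -/

open Polynomial

lemma Polynomial.eq_of_natDegree_le_of_eval_index_eq {R ι : Type*} [CommRing R] [IsDomain R]
    {f g : R[X]} {n : ℕ} {v : ι → R} (s : Finset ι) (hvs : Set.InjOn v s) (hs : n < s.card)
    (hf : f.natDegree ≤ n) (hg : g.natDegree ≤ n)
    (eval_fg : ∀ i ∈ s, f.eval (v i) = g.eval (v i)) : f = g := by
  have hn : (n : WithBot ℕ) < s.card := by exact_mod_cast hs
  exact eq_of_degrees_lt_of_eval_index_eq s hvs ((degree_le_of_natDegree_le hf).trans_lt hn)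
    ((degree_le_of_natDegree_le hg).trans_lt hn) eval_fg

lemma MvPolynomial.eval_aeval_polynomial {R σ : Type*} [CommSemiring R]
    (p : σ → R[X]) (f : MvPolynomial σ R) (x : R) :
    (aeval p f).eval x = MvPolynomial.eval (fun c ↦ (p c).eval x) f := by
  rw [← coe_aeval_eq_eval, ← Polynomial.coe_aeval_eq_eval]
  exact comp_aeval_apply p (Polynomial.aeval x) f

theorem stmt12_general {F : Type*} [Field F] {m d k s : ℕ}
    (f : MvPolynomial (Fin m) F) (hf : f.totalDegree ≤ d)
    (p : Fin m → Polynomial F) (hp : ∀ c, (p c).natDegree ≤ k - 2)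
    (X : Fin k → Fin m → F) (β : Fin k → F)
    (hX : ∀ i c, (p c).eval (β i) = X i c)
    (hF : ((d * (k - 2) + s + 1 : ℕ) : Cardinal) ≤ Cardinal.mk F) :
    ∃ γ : Fin (d * (k - 2) + s + 1) → F, Function.Injective γ ∧
      ∀ S : Finset (Fin (d * (k - 2) + s + 1)), d * (k - 2) + 1 ≤ S.card →
        ∀ g : Polynomial F, g.natDegree ≤ d * (k - 2) →
          (∀ j ∈ S, g.eval (γ j) = (MvPolynomial.aeval p f).eval (γ j)) →
          ∀ i, g.eval (β i) = MvPolynomial.eval (X i) f := by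
  obtain ⟨γ⟩ : Nonempty (Fin (d * (k - 2) + s + 1) ↪ F) :=
    Cardinal.lift_mk_le'.mp (by simpa using hF)
  refine ⟨γ, γ.injective, fun S hS g hg hgS i ↦ ?_⟩
  have hfp : (MvPolynomial.aeval p f).natDegree ≤ d * (k - 2) :=
    MvPolynomial.aeval_natDegree_le f hf p hp
  have hg_eq : g = MvPolynomial.aeval p f :=
    eq_of_natDegree_le_of_eval_index_eq S γ.injective.injOn hS hg hfp hgS
  have hXi : (fun c ↦ (p c).eval (β i)) = X i := funext (hX i)
  rw [hg_eq, MvPolynomial.eval_aeval_polynomial, hXi]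

/-- If `f` has total degree ≤ d and the points `X i` lie on a curve `p` of
componentwise degree ≤ k-2 (at distinct parameters `β i`), and `|F| ≥ d(k-2)+s+1`, then there
are `d(k-2)+s+1` distinct evaluation points of the univariate polynomial `f ∘ p` such that any
`d(k-2)+1` of the corresponding values determine `f(X 1), …, f(X k)`: any univariate polynomial
of degree ≤ d(k-2) matching `f ∘ p` on such a subset takes the values `f(X i)` at the `β i`. -/
theorem stmt12 {F : Type*} [Field F] {m d k s : ℕ}
    (f : MvPolynomial (Fin m) F) (hf : f.totalDegree ≤ d)
    (p : Fin m → Polynomial F) (hp : ∀ c, (p c).natDegree ≤ k - 2)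
    (X : Fin k → Fin m → F) (β : Fin k → F) (hβ : Function.Injective β)
    (hX : ∀ i c, (p c).eval (β i) = X i c)
    (hF : ((d * (k - 2) + s + 1 : ℕ) : Cardinal) ≤ Cardinal.mk F) :
    ∃ γ : Fin (d * (k - 2) + s + 1) → F, Function.Injective γ ∧
      ∀ S : Finset (Fin (d * (k - 2) + s + 1)), d * (k - 2) + 1 ≤ S.card →
        ∀ g : Polynomial F, g.natDegree ≤ d * (k - 2) →
          (∀ j ∈ S, g.eval (γ j) = (MvPolynomial.aeval p f).eval (γ j)) →
          ∀ i, g.eval (β i) = MvPolynomial.eval (X i) f :=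
  stmt12_general f hf p hp X β hX hF
end
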